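/- arXiv:1202.0168 — 2 statements merged into one kernel-verified Lean document; each statement's English description precedes it below -/
import Mathlib

section
/- Let M be a fixed positive integer. Then as N → ∞ through integers N > M, log(Γ_M(N)) = N·∑_{i=1}^{M} log(N - i) + (M²/2)·log(πe/N) + (M/2)·log(2e) - MN + o(1), where Γ_M(N) = π^{M(M-1)/2} ∏_{i=1}^{M}(N-i)!. -/
/-!
By Stirling, `log n! = n log n - n + log (2πn) / 2 + o(1)`. Applied to `n = N - i`, this leaves
`(1/2 - i) log (N - i) = (1/2 - i) log N + o(1)` against the claimed expansion, and
`∑_{i=1}^M (1/2 - i) = -M²/2` produces the `log N` term; the constants collect via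
`∑_{i=1}^M i = M(M+1)/2`.
-/

open Filter Real Finset Topology
open scoped Nat

noncomputable def logStirlingError (n : ℕ) : ℝ :=
  log n ! - (n * log n - n + log (2 * π * n) / 2)

theorem logStirlingError_eq_log_stirlingSeq_sub {n : ℕ} (hn : n ≠ 0) :
    logStirlingError n = log (Stirling.stirlingSeq n) - log √π := by
  have hn' : (n : ℝ) ≠ 0 := Nat.cast_ne_zero.mpr hn
  rw [logStirlingError, Stirling.log_stirlingSeq_formula, log_sqrt pi_pos.le,
    log_div hn' (exp_ne_zero 1), log_exp, log_mul (by positivity) hn', log_mul two_ne_zero hn',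
    log_mul two_ne_zero pi_ne_zero]
  ring

theorem tendsto_logStirlingError : Tendsto logStirlingError atTop (𝓝 0) := by
  have hlog : Tendsto (fun n => log (Stirling.stirlingSeq n) - log √π) atTop (𝓝 0) := by
    rw [← sub_self (log √π)]
    exact ((continuousAt_log (by positivity)).tendsto.comp
      Stirling.tendsto_stirlingSeq_sqrt_pi).sub_const _
  refine hlog.congr' ?_
  filter_upwards [eventually_ne_atTop 0] with n hn
  exact (logStirlingError_eq_log_stirlingSeq_sub hn).symm

theorem tendsto_log_natCast_sub_div_self (c : ℝ) :
    Tendsto (fun n : ℕ => log ((n - c) / n)) atTop (𝓝 0) := by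
  have hratio : Tendsto (fun n : ℕ => 1 - c / n) atTop (𝓝 1) := by
    simpa using tendsto_const_nhds.sub (tendsto_const_div_atTop_nhds_zero_nat c)
  rw [← log_one]
  refine ((continuousAt_log one_ne_zero).tendsto.comp hratio).congr' ?_
  filter_upwards [eventually_ne_atTop 0] with n hn
  simp [sub_div, div_self (Nat.cast_ne_zero.mpr hn : (n : ℝ) ≠ 0)]

theorem sum_Icc_one_natCast_mul_two (M : ℕ) : (∑ i ∈ Icc 1 M, (i : ℝ)) * 2 = M * (M + 1) := by
  induction M with
  | zero => simp
  | succ M ih =>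
    rw [sum_Icc_succ_top (by omega), add_mul, ih]
    push_cast
    ring

theorem logStirlingError_sub_add_mul_log_div {N i : ℕ} (hi : i < N) :
    logStirlingError (N - i) + (1 / 2 - i) * log ((N - i) / N) =
      log (N - i)! - N * log (N - i) + (N - i) - (log 2 + log π) / 2 + (i - 1 / 2) * log N := by
  have hsub : ((N - i : ℕ) : ℝ) = N - i := Nat.cast_sub hi.le
  have hpos : (0 : ℝ) < N - i := sub_pos.mpr (mod_cast hi)
  have hN : (N : ℝ) ≠ 0 := Nat.cast_ne_zero.mpr (by omega)
  rw [logStirlingError, hsub, log_div hpos.ne' hN, log_mul (by positivity) hpos.ne',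
    log_mul two_ne_zero pi_ne_zero]
  ring

theorem log_multivariateGamma_sub_eq_sum {M N : ℕ} (hMN : M < N) :
    log (π ^ (M * (M - 1) / 2) * ∏ i ∈ Icc 1 M, ((N - i)! : ℝ))
        - (N * ∑ i ∈ Icc 1 M, log ((N : ℝ) - i) + ((M : ℝ) ^ 2 / 2) * log (π * exp 1 / N)
          + ((M : ℝ) / 2) * log (2 * exp 1) - M * N) =
      ∑ i ∈ Icc 1 M, (logStirlingError (N - i) + (1 / 2 - i) * log ((N - i) / N)) := by
  have hN : (N : ℝ) ≠ 0 := Nat.cast_ne_zero.mpr (by omega)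
  have hchoose : ((M * (M - 1) / 2 : ℕ) : ℝ) = M * (M - 1) / 2 := by
    rw [← Nat.choose_two_right, Nat.cast_choose_two]
  rw [sum_congr rfl fun i hi => logStirlingError_sub_add_mul_log_div (by grind),
    log_mul (by positivity) (by positivity), log_pow, hchoose,
    log_prod fun i _ => by positivity, log_div (by positivity) hN,
    log_mul pi_ne_zero (exp_ne_zero 1), log_mul two_ne_zero (exp_ne_zero 1), log_exp]
  simp only [sum_add_distrib, sum_sub_distrib, ← mul_sum, ← sum_mul, sum_const, Nat.card_Icc,
    nsmul_eq_mul, add_tsub_cancel_right]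
  linear_combination ((1 - log N) / 2) * sum_Icc_one_natCast_mul_two M

theorem log_multivariate_gamma_asymptotic_general (M : ℕ) :
    Filter.Tendsto
      (fun N : ℕ =>
        Real.log (Real.pi ^ (M * (M - 1) / 2) *
            ∏ i ∈ Finset.Icc 1 M, (Nat.factorial (N - i) : ℝ))
          - ((N : ℝ) * ∑ i ∈ Finset.Icc 1 M, Real.log ((N : ℝ) - i)
              + ((M : ℝ) ^ 2 / 2) * Real.log (Real.pi * Real.exp 1 / N)
              + ((M : ℝ) / 2) * Real.log (2 * Real.exp 1)
              - (M : ℝ) * N))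
      Filter.atTop (nhds 0) := by
  have hterm (i : ℕ) : Tendsto (fun N : ℕ =>
      logStirlingError (N - i) + (1 / 2 - i) * log ((N - i) / N)) atTop (𝓝 0) := by
    simpa using (tendsto_logStirlingError.comp (tendsto_sub_atTop_nat i)).add
      ((tendsto_log_natCast_sub_div_self i).const_mul ((1 : ℝ) / 2 - i))
  have hsum := tendsto_finsetSum (Icc 1 M) fun i _ => hterm i
  rw [sum_const_zero] at hsum
  refine hsum.congr' ?_
  filter_upwards [eventually_gt_atTop M] with N hMN
  exact (log_multivariateGamma_sub_eq_sum hMN).symm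

theorem log_multivariate_gamma_asymptotic (M : ℕ) (hM : 0 < M) :
    Filter.Tendsto
      (fun N : ℕ =>
        Real.log (Real.pi ^ (M * (M - 1) / 2) *
            ∏ i ∈ Finset.Icc 1 M, (Nat.factorial (N - i) : ℝ))
          - ((N : ℝ) * ∑ i ∈ Finset.Icc 1 M, Real.log ((N : ℝ) - i)
              + ((M : ℝ) ^ 2 / 2) * Real.log (Real.pi * Real.exp 1 / N)
              + ((M : ℝ) / 2) * Real.log (2 * Real.exp 1)
              - (M : ℝ) * N))
      Filter.atTop (nhds 0) :=
  log_multivariate_gamma_asymptotic_general M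
end

section
/- Weyl's inequality for eigenvalue sums: if A and B are n × n Hermitian matrices, then for every index i, λ_i(A + B) ≤ λ_i(A) + λ_1(B), where λ_1 ≥ λ_2 ≥ … ≥ λ_n denote eigenvalues in decreasing order. -/
/-!
The Courant–Fischer argument. Let `u₀, …, u_{n-1}` and `v₀, …, v_{n-1}` be orthonormal eigenbases of
`A + B` and `A`, ordered by decreasing eigenvalue. The spans of `u₀, …, uᵢ` and of `vᵢ, …, v_{n-1}`
have dimensions `i + 1` and `n - i`, so they share a nonzero vector `x`. On the first span the
Rayleigh quotient of `A + B` is at least `λᵢ(A + B)`, on the second that of `A` is at most `λᵢ(A)`,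
and that of `B` is everywhere at most `λ₀(B)`; since `⟪x, (A + B) x⟫ = ⟪x, A x⟫ + ⟪x, B x⟫`
the inequality follows.
-/

/-- The eigenvalues of a Hermitian matrix arranged in decreasing order:
`eigDesc hA 0` is the largest eigenvalue, etc. -/
noncomputable def eigDesc {n : ℕ} {A : Matrix (Fin n) (Fin n) ℂ}
    (hA : A.IsHermitian) : Fin n → ℝ :=
  fun i => (hA.eigenvalues ∘ Tuple.sort hA.eigenvalues) i.rev

open Matrix Module Submodule
open scoped InnerProductSpace

namespace OrthonormalBasis

variable {𝕜 E ι : Type*} [RCLike 𝕜] [NormedAddCommGroup E] [InnerProductSpace 𝕜 E] [Fintype ι]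
  (b : OrthonormalBasis ι 𝕜 E) {T : E →ₗ[𝕜] E} {μ : ι → ℝ}

theorem re_inner_apply_eq_sum (hT : ∀ j, T (b j) = (μ j : 𝕜) • b j) (x : E) :
    RCLike.re ⟪x, T x⟫_𝕜 = ∑ j, μ j * ‖⟪b j, x⟫_𝕜‖ ^ 2 := by
  have hTx : T x = ∑ j, (⟪b j, x⟫_𝕜 * μ j) • b j := by
    conv_lhs => rw [← b.sum_repr' x]
    simp only [map_sum, map_smul, hT, smul_smul]
  rw [hTx, inner_sum, map_sum]
  refine Finset.sum_congr rfl fun j _ => ?_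
  rw [inner_smul_right, ← inner_conj_symm, mul_right_comm, RCLike.conj_mul, RCLike.norm_conj]
  norm_cast
  ring

theorem mem_of_mem_span_image_of_inner_ne_zero {s : Set ι} {x : E}
    (hx : x ∈ span 𝕜 (b '' s)) {j : ι} (hj : ⟪b j, x⟫_𝕜 ≠ 0) : j ∈ s := by
  rw [← b.coe_toBasis, Basis.mem_span_image] at hx
  exact hx (by simpa [b.repr_apply_apply] using hj)

theorem re_inner_apply_le (hT : ∀ j, T (b j) = (μ j : 𝕜) • b j) {x : E} {c : ℝ}
    (hc : ∀ j, ⟪b j, x⟫_𝕜 ≠ 0 → μ j ≤ c) : RCLike.re ⟪x, T x⟫_𝕜 ≤ c * ‖x‖ ^ 2 := by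
  rw [b.re_inner_apply_eq_sum hT, ← b.sum_sq_norm_inner_right, Finset.mul_sum]
  refine Finset.sum_le_sum fun j _ => ?_
  by_cases hj : ⟪b j, x⟫_𝕜 = 0
  · simp [hj]
  · exact mul_le_mul_of_nonneg_right (hc j hj) (by positivity)

theorem le_re_inner_apply (hT : ∀ j, T (b j) = (μ j : 𝕜) • b j) {x : E} {c : ℝ}
    (hc : ∀ j, ⟪b j, x⟫_𝕜 ≠ 0 → c ≤ μ j) : c * ‖x‖ ^ 2 ≤ RCLike.re ⟪x, T x⟫_𝕜 := by
  rw [b.re_inner_apply_eq_sum hT, ← b.sum_sq_norm_inner_right, Finset.mul_sum]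
  refine Finset.sum_le_sum fun j _ => ?_
  by_cases hj : ⟪b j, x⟫_𝕜 = 0
  · simp [hj]
  · exact mul_le_mul_of_nonneg_right (hc j hj) (by positivity)

theorem finrank_span_image (s : Finset ι) : finrank 𝕜 (span 𝕜 (b '' s)) = s.card := by
  rw [Set.image_eq_range, ← Fintype.card_coe]
  exact finrank_span_eq_card (b.orthonormal.linearIndependent.comp _ Subtype.val_injective)

end OrthonormalBasis

theorem exists_ne_zero_mem_span_Iic_inf_span_Ici {𝕜 E : Type*} [RCLike 𝕜] [NormedAddCommGroup E]
    [InnerProductSpace 𝕜 E] {n : ℕ} (b b' : OrthonormalBasis (Fin n) 𝕜 E) (i : Fin n) :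
    ∃ x ≠ 0, x ∈ span 𝕜 (b '' Set.Iic i) ∧ x ∈ span 𝕜 (b' '' Set.Ici i) := by
  have : FiniteDimensional 𝕜 E := b.toBasis.finiteDimensional_of_finite
  have hdim : finrank 𝕜 E <
      finrank 𝕜 (span 𝕜 (b '' Set.Iic i)) + finrank 𝕜 (span 𝕜 (b' '' Set.Ici i)) := by
    rw [← Finset.coe_Iic, ← Finset.coe_Ici, b.finrank_span_image, b'.finrank_span_image,
      Fin.card_Iic, Fin.card_Ici, finrank_eq_card_basis b.toBasis, Fintype.card_fin]
    omega
  obtain ⟨x, hxS, hxT, hx0⟩ := by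
    simpa [disjoint_def] using mt finrank_add_finrank_le_of_disjoint hdim.not_ge
  exact ⟨x, hx0, hxS, hxT⟩

namespace Matrix.IsHermitian

variable {n : ℕ} {A : Matrix (Fin n) (Fin n) ℂ} (hA : A.IsHermitian)

theorem eigDesc_antitone : Antitone (eigDesc hA) :=
  (Tuple.monotone_sort hA.eigenvalues).comp_antitone Fin.rev_anti

noncomputable def eigDescBasis : OrthonormalBasis (Fin n) ℂ (EuclideanSpace ℂ (Fin n)) :=
  hA.eigenvectorBasis.reindex (Fin.revPerm.trans (Tuple.sort hA.eigenvalues)).symm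

theorem toEuclideanLin_eigDescBasis (i : Fin n) :
    toEuclideanLin A (hA.eigDescBasis i) = (eigDesc hA i : ℂ) • hA.eigDescBasis i := by
  ext k
  simp [eigDescBasis, eigDesc, toLpLin_apply, hA.mulVec_eigenvectorBasis]

end Matrix.IsHermitian

theorem weyl_eigenvalue_inequality {n : ℕ} (A B : Matrix (Fin n) (Fin n) ℂ)
    (hA : A.IsHermitian) (hB : B.IsHermitian) (hAB : (A + B).IsHermitian)
    (i : Fin n) :
    eigDesc hAB i ≤ eigDesc hA i + eigDesc hB ⟨0, i.pos⟩ := by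
  obtain ⟨x, hx0, hxAB, hxA⟩ :=
    exists_ne_zero_mem_span_Iic_inf_span_Ici hAB.eigDescBasis hA.eigDescBasis i
  have hAB_ge : eigDesc hAB i * ‖x‖ ^ 2 ≤ RCLike.re ⟪x, toEuclideanLin (A + B) x⟫_ℂ :=
    hAB.eigDescBasis.le_re_inner_apply hAB.toEuclideanLin_eigDescBasis fun _ hj =>
      hAB.eigDesc_antitone (hAB.eigDescBasis.mem_of_mem_span_image_of_inner_ne_zero hxAB hj)
  have hA_le : RCLike.re ⟪x, toEuclideanLin A x⟫_ℂ ≤ eigDesc hA i * ‖x‖ ^ 2 :=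
    hA.eigDescBasis.re_inner_apply_le hA.toEuclideanLin_eigDescBasis fun _ hj =>
      hA.eigDesc_antitone (hA.eigDescBasis.mem_of_mem_span_image_of_inner_ne_zero hxA hj)
  have hB_le : RCLike.re ⟪x, toEuclideanLin B x⟫_ℂ ≤ eigDesc hB ⟨0, i.pos⟩ * ‖x‖ ^ 2 :=
    hB.eigDescBasis.re_inner_apply_le hB.toEuclideanLin_eigDescBasis fun j _ =>
      hB.eigDesc_antitone (Nat.zero_le j)
  have hsplit : RCLike.re ⟪x, toEuclideanLin (A + B) x⟫_ℂ =
      RCLike.re ⟪x, toEuclideanLin A x⟫_ℂ + RCLike.re ⟪x, toEuclideanLin B x⟫_ℂ := by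
    rw [map_add, LinearMap.add_apply, inner_add_right, map_add]
  refine le_of_mul_le_mul_right ?_ (by positivity : 0 < ‖x‖ ^ 2)
  linarith [add_mul (eigDesc hA i) (eigDesc hB ⟨0, i.pos⟩) (‖x‖ ^ 2)]
end
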